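/- Let ι be a finite index type, let f : ι → ι → ι → ℂ be totally antisymmetric (antisymmetric under the exchange of any two of its three arguments), let A be an associative ℂ-algebra, let X : ι → A satisfy X_A·X_B − X_B·X_A = i·∑_{C ∈ ι} f(A,B,C)·X_C for all A, B ∈ ι, let τ : A → ℂ be ℂ-linear, and suppose there is x ∈ ℂ with τ(X_A·X_B·X_C) = x·f(A,B,C) for all A, B, C ∈ ι. Define P_{AB} = X_A·X_B − i·∑_{E ∈ ι} f(A,B,E)·X_E. Then for all A, B, C ∈ ι: τ(P_{AB}·X_C) = −(i/2)·∑_{D ∈ ι} f(A,B,D)·τ(X_D·X_C). -/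

import Mathlib

/-!
Pairing the commutation relation with `X c` under `τ` gives
`i ∑_d f(a,b,d) τ(X_d X_c) = τ(X_a X_b X_c) - τ(X_b X_a X_c) = 2 x f(a,b,c)`. Hence
`τ(P_{ab} X_c) = x f(a,b,c) - 2 x f(a,b,c) = -x f(a,b,c)`, which is also the right-hand side.
-/

section

variable {R A ι : Type*} [CommRing R] [Ring A] [Algebra R A]

theorem LinearMap.map_smul_sum_smul_mul [Fintype ι] (τ : A →ₗ[R] R) (r : R) (g : ι → R)
    (X : ι → A) (Y : A) : τ ((r • ∑ e, g e • X e) * Y) = r * ∑ e, g e * τ (X e * Y) := by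
  simp only [smul_mul_assoc, Finset.sum_mul, map_smul, map_sum, smul_eq_mul]

theorem LinearMap.map_commutator_mul_of_map_mul_mul (τ : A →ₗ[R] R) (X : ι → A)
    (f : ι → ι → ι → R) (x : R) (hf : ∀ a b c, f a b c = -f b a c)
    (hx : ∀ a b c, τ (X a * X b * X c) = x * f a b c) (a b c : ι) :
    τ ((X a * X b - X b * X a) * X c) = 2 * (x * f a b c) := by
  rw [sub_mul, map_sub, hx, hx, hf b a c]
  ring

end

theorem twisted_trace_normal_ordered_mixing_general
    {ι : Type*} [Fintype ι] (f : ι → ι → ι → ℂ)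
    (hf12 : ∀ a b c : ι, f a b c = - f b a c)
    {A : Type*} [Ring A] [Algebra ℂ A] (X : ι → A)
    (hX : ∀ a b : ι, X a * X b - X b * X a = Complex.I • ∑ c : ι, f a b c • X c)
    (τ : A →ₗ[ℂ] ℂ) (x : ℂ)
    (hx : ∀ a b c : ι, τ (X a * X b * X c) = x * f a b c) :
    ∀ a b c : ι,
      τ ((X a * X b - Complex.I • ∑ e : ι, f a b e • X e) * X c)
        = -(Complex.I / 2) * ∑ d : ι, f a b d * τ (X d * X c) := by
  intro a b c
  have hsum : Complex.I * ∑ d, f a b d * τ (X d * X c) = 2 * (x * f a b c) := by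
    rw [← τ.map_smul_sum_smul_mul, ← hX, τ.map_commutator_mul_of_map_mul_mul X f x hf12 hx]
  rw [sub_mul, map_sub, hx, τ.map_smul_sum_smul_mul]
  linear_combination (-1 / 2 : ℂ) * hsum

/-- With `ι` finite, `f` totally antisymmetric, `X : ι → A` satisfying
`X a * X b − X b * X a = i • ∑ c, f a b c • X c`, `τ` ℂ-linear with
`τ (X a * X b * X c) = x * f a b c`, and
`P a b = X a * X b − i • ∑ e, f a b e • X e`, one has
`τ (P a b * X c) = −(i/2) ∑_d f(a,b,d) τ(X d * X c)`. -/
theorem twisted_trace_normal_ordered_mixing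
    {ι : Type*} [Fintype ι] (f : ι → ι → ι → ℂ)
    (hf12 : ∀ a b c : ι, f a b c = - f b a c)
    (hf23 : ∀ a b c : ι, f a b c = - f a c b)
    (hf13 : ∀ a b c : ι, f a b c = - f c b a)
    {A : Type*} [Ring A] [Algebra ℂ A] (X : ι → A)
    (hX : ∀ a b : ι, X a * X b - X b * X a = Complex.I • ∑ c : ι, f a b c • X c)
    (τ : A →ₗ[ℂ] ℂ) (x : ℂ)
    (hx : ∀ a b c : ι, τ (X a * X b * X c) = x * f a b c) :
    ∀ a b c : ι,
      τ ((X a * X b - Complex.I • ∑ e : ι, f a b e • X e) * X c)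
        = -(Complex.I / 2) * ∑ d : ι, f a b d * τ (X d * X c) :=
  twisted_trace_normal_ordered_mixing_general f hf12 X hX τ x hx
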